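/- If the degree-0 component f₀ is a quasi-isomorphism from the ℤ-graded complex (C, d_{C,1}) to (D, d_{D,1}) — i.e. for every m it induces an isomorphism (ker d_{C,1} ∩ C^{(m)})/d_{C,1}(C^{(m−1)}) → (ker d_{D,1} ∩ D^{(m)})/d_{D,1}(D^{(m−1)}) — then f is a quasi-isomorphism of the ℤ/2-graded complexes: for each ε ∈ ℤ/2, f induces an isomorphism (ker d_C ∩ C^ε)/d_C(C^{1−ε}) → (ker d_D ∩ D^ε)/d_D(D^{1−ε}). -/
import Mathlib


/-!
**Statement 4.**  A spectral-sequence comparison lemma: for ℤ-graded complexes, bounded in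
degree, whose differentials decompose into components of degrees `1, −1, −3, …` and a
filtered chain map between them with components of degrees `0, −2, −4, …`, if the
degree-`0` component of the map is a quasi-isomorphism for the top (degree-`1`) parts of
the differentials, then the map itself is a quasi-isomorphism of the associated
`ℤ/2`-graded complexes.
-/

open scoped DirectSum

noncomputable section

variable {R₀ : Type} [CommRing R₀]

/-- The `ℤ/2`-graded piece of parity `ε` of a ℤ-graded module with grading `G`. -/
def ZMod2Part {C : Type} [AddCommGroup C] [Module R₀ C]
    (G : ℤ → Submodule R₀ C) (ε : ZMod 2) : Submodule R₀ C :=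
  ⨆ m : ℤ, ⨆ _ : (m : ZMod 2) = ε, G m

section Aux

variable {M N : Type} [AddCommGroup M] [Module R₀ M] [AddCommGroup N] [Module R₀ N]

/-- The submodule spanned by the graded pieces `G m` for all `m` satisfying `p`. -/
def SupCond (G : ℤ → Submodule R₀ M) (p : ℤ → Prop) : Submodule R₀ M :=
  ⨆ m : ℤ, ⨆ _ : p m, G m

theorem zmod2Part_eq (G : ℤ → Submodule R₀ M) (ε : ZMod 2) :
    ZMod2Part G ε = SupCond G (fun m => (m : ZMod 2) = ε) := rfl

theorem mem_supCond {G : ℤ → Submodule R₀ M} {p : ℤ → Prop} {m : ℤ} (hp : p m)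
    {x : M} (hx : x ∈ G m) : x ∈ SupCond G p :=
  Submodule.mem_iSup_of_mem m (Submodule.mem_iSup_of_mem hp hx)

theorem supCond_le {G : ℤ → Submodule R₀ M} {p : ℤ → Prop} {K : Submodule R₀ M}
    (h : ∀ m, p m → G m ≤ K) : SupCond G p ≤ K :=
  iSup_le fun m => iSup_le fun hm => h m hm

theorem supCond_mono {G : ℤ → Submodule R₀ M} {p q : ℤ → Prop}
    (h : ∀ m, p m → q m) : SupCond G p ≤ SupCond G q :=
  supCond_le fun m hm => fun _ hx => mem_supCond (h m hm) hx

theorem map_supCond {G : ℤ → Submodule R₀ M} {H : ℤ → Submodule R₀ N} {p q : ℤ → Prop}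
    (g : M →ₗ[R₀] N) (h : ∀ m, p m → ∀ x ∈ G m, g x ∈ SupCond H q) :
    ∀ x ∈ SupCond G p, g x ∈ SupCond H q := by
  intro x hx
  have hle : SupCond G p ≤ (SupCond H q).comap g :=
    supCond_le fun m hm => fun y hy => h m hm y hy
  exact hle hx

theorem supCond_eq_bot {G : ℤ → Submodule R₀ M} {p : ℤ → Prop}
    (h : ∀ m, p m → G m = ⊥) : SupCond G p = ⊥ :=
  le_bot_iff.mp (supCond_le fun m hm => (h m hm).le)

theorem supCond_zero {G : ℤ → Submodule R₀ M} (hind : iSupIndep G) {p : ℤ → Prop} {n : ℤ}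
    (hp : ∀ m, p m → m ≠ n) {x : M} (hx : x ∈ G n) (hx' : x ∈ SupCond G p) : x = 0 := by
  have h1 : SupCond G p ≤ ⨆ (j) (_ : j ≠ n), G j :=
    supCond_le fun m hm => le_iSup₂_of_le m (hp m hm) le_rfl
  exact Submodule.disjoint_def.mp (iSupIndep_def.mp hind n) x hx (h1 hx')

theorem two_zmod2 : (2 : ZMod 2) = 0 := by decide

theorem jsup_le {G : ℤ → Submodule R₀ M} (a : ℤ) :
    (⨆ j : ℕ, ⨆ _ : 1 ≤ j, G (a - 2 * (j : ℤ))) ≤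
      SupCond G (fun k => k ≤ a - 2 ∧ (k : ZMod 2) = (a : ZMod 2)) := by
  refine iSup_le fun j => iSup_le fun hj => ?_
  intro x hx
  refine mem_supCond ⟨by omega, ?_⟩ hx
  push_cast
  linear_combination (-(j : ZMod 2)) * two_zmod2

/-- The cone-type map `(c, u) ↦ (-(dC c), f c + dD u)`. -/
def coneMap {C D : Type} [AddCommGroup C] [Module R₀ C] [AddCommGroup D] [Module R₀ D]
    (dC : C →ₗ[R₀] C) (f : C →ₗ[R₀] D) (dD : D →ₗ[R₀] D) : C × D →ₗ[R₀] C × D :=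
  ((-dC).comp (LinearMap.fst R₀ C D)).prod
    ((f.comp (LinearMap.fst R₀ C D)) + (dD.comp (LinearMap.snd R₀ C D)))

theorem coneMap_apply {C D : Type} [AddCommGroup C] [Module R₀ C] [AddCommGroup D]
    [Module R₀ D] (dC : C →ₗ[R₀] C) (f : C →ₗ[R₀] D) (dD : D →ₗ[R₀] D) (x : C × D) :
    coneMap dC f dD x = (-(dC x.1), f x.1 + dD x.2) := rfl

/-- The acyclicity engine: a bounded-below graded complex whose differential has a
degree-`1` part `δ1` with exact rows, plus lower-order parts `δ'`, is acyclic. -/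
theorem engine {X : Type} [AddCommGroup X] [Module R₀ X] (XG : ℤ → Submodule R₀ X)
    (hzero : ∀ (n : ℤ) (p : ℤ → Prop), (∀ m, p m → m ≠ n) →
      ∀ x ∈ XG n, x ∈ SupCond XG p → x = 0)
    (δ1 δ' : X →ₗ[R₀] X)
    (hδ1 : ∀ m, ∀ x ∈ XG m, δ1 x ∈ XG (m + 1))
    (hδ' : ∀ m, ∀ x ∈ XG m, δ' x ∈
      SupCond XG (fun k => k ≤ m - 1 ∧ (k : ZMod 2) = (m : ZMod 2) + 1))
    (hδδ : ∀ x, (δ1 + δ') ((δ1 + δ') x) = 0)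
    (hacy : ∀ m, ∀ x ∈ XG m, δ1 x = 0 → ∃ z ∈ XG (m - 1), x = δ1 z)
    (B : ℤ) (hbd : ∀ m, m < B → XG m = ⊥) :
    ∀ (t : ℤ) (ε : ZMod 2), ∀ ξ ∈ SupCond XG (fun m => m ≤ t ∧ (m : ZMod 2) = ε),
      (δ1 + δ') ξ = 0 →
      ∃ ζ ∈ SupCond XG (fun m => m ≤ t - 1 ∧ (m : ZMod 2) = ε + 1), ξ = (δ1 + δ') ζ := by
  have main : ∀ (n : ℕ) (t : ℤ), t ≤ B - 1 + n → ∀ (ε : ZMod 2),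
      ∀ ξ ∈ SupCond XG (fun m => m ≤ t ∧ (m : ZMod 2) = ε), (δ1 + δ') ξ = 0 →
      ∃ ζ ∈ SupCond XG (fun m => m ≤ t - 1 ∧ (m : ZMod 2) = ε + 1), ξ = (δ1 + δ') ζ := by
    intro n
    induction n with
    | zero =>
      intro t ht ε ξ hξ _
      have hb : SupCond XG (fun m => m ≤ t ∧ (m : ZMod 2) = ε) = ⊥ :=
        supCond_eq_bot fun m hm => hbd m (by omega)
      rw [hb, Submodule.mem_bot] at hξ
      exact ⟨0, Submodule.zero_mem _, by rw [hξ, map_zero]⟩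
    | succ n ih =>
      intro t ht ε ξ hξ hδξ
      by_cases hpar : (t : ZMod 2) = ε
      · -- decompose ξ into its top piece and the rest
        have hle : SupCond XG (fun m => m ≤ t ∧ (m : ZMod 2) = ε) ≤
            XG t ⊔ SupCond XG (fun m => m ≤ t - 2 ∧ (m : ZMod 2) = ε) := by
          apply supCond_le
          rintro m ⟨hm1, hm2⟩
          rcases eq_or_lt_of_le hm1 with rfl | hlt
          · exact le_sup_of_le_left le_rfl
          · refine le_sup_of_le_right fun x hx => mem_supCond ⟨?_, hm2⟩ hx
            by_cases hm3 : m = t - 1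
            · exfalso
              rw [hm3] at hm2
              have h2 : ((t : ℤ) : ZMod 2) - 1 = (t : ZMod 2) := by
                push_cast at hm2
                rw [hm2, hpar]
              have h3 : (1 : ZMod 2) = 0 := by linear_combination -h2
              exact one_ne_zero h3
            · omega
        obtain ⟨ξt, hξt, ξ', hξ', hsum⟩ := Submodule.mem_sup.mp (hle hξ)
        have hδ1ξt : δ1 ξt ∈ XG (t + 1) := hδ1 t ξt hξt
        have hrest : δ' ξt + (δ1 + δ') ξ' ∈
            SupCond XG (fun m => m ≤ t - 1 ∧ (m : ZMod 2) = ε + 1) := by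
          apply Submodule.add_mem
          · refine supCond_mono (fun k hk => ⟨hk.1, ?_⟩) (hδ' t ξt hξt)
            rw [hk.2, hpar]
          · refine map_supCond (δ1 + δ') ?_ ξ' hξ'
            rintro m ⟨hm1, hm2⟩ x hx
            rw [LinearMap.add_apply]
            apply Submodule.add_mem
            · refine mem_supCond ⟨by omega, ?_⟩ (hδ1 m x hx)
              push_cast
              rw [hm2]
            · refine supCond_mono (fun k hk => ⟨by omega, ?_⟩) (hδ' m x hx)
              rw [hk.2, hm2]
        have hδ1ξt0 : δ1 ξt = 0 := by
          refine hzero (t + 1) (fun m => m ≤ t - 1 ∧ (m : ZMod 2) = ε + 1)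
            (fun m hm => by have := hm.1; omega) _ hδ1ξt ?_
          have heq : δ1 ξt = -(δ' ξt + (δ1 + δ') ξ') := by
            have h0 : (δ1 + δ') (ξt + ξ') = 0 := by rw [hsum]; exact hδξ
            simp only [LinearMap.add_apply, map_add] at h0 ⊢
            rw [eq_neg_iff_add_eq_zero, ← h0]
            abel
          rw [heq]
          exact Submodule.neg_mem _ hrest
        obtain ⟨ζt, hζt, hξtδ⟩ := hacy t ξt hξt hδ1ξt0
        have hξ2mem : ξ' - δ' ζt ∈ SupCond XG (fun m => m ≤ t - 2 ∧ (m : ZMod 2) = ε) := by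
          apply Submodule.sub_mem _ hξ'
          refine supCond_mono (fun k hk => ⟨by omega, ?_⟩) (hδ' (t - 1) ζt hζt)
          rw [hk.2, ← hpar]
          push_cast
          ring
        have hξ2δ : (δ1 + δ') (ξ' - δ' ζt) = 0 := by
          have hrw : ξ' - δ' ζt = ξ - (δ1 + δ') ζt := by
            rw [← hsum, hξtδ]
            simp only [LinearMap.add_apply]
            abel
          rw [hrw, map_sub, hδξ, hδδ ζt, sub_zero]
        obtain ⟨ζ', hζ', hξ2eq⟩ := ih (t - 2) (by omega) ε (ξ' - δ' ζt) hξ2mem hξ2δ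
        refine ⟨ζt + ζ', Submodule.add_mem _ ?_
          (supCond_mono (fun k hk => ⟨by omega, hk.2⟩) hζ'), ?_⟩
        · refine mem_supCond ⟨by omega, ?_⟩ hζt
          rw [← hpar]
          push_cast
          linear_combination -two_zmod2
        · rw [map_add, ← hξ2eq, ← hsum, hξtδ]
          simp only [LinearMap.add_apply]
          abel
      · -- top degree has the wrong parity: nothing in degree t
        have hξ' : ξ ∈ SupCond XG (fun m => m ≤ t - 1 ∧ (m : ZMod 2) = ε) := by
          refine supCond_mono (fun m hm => ⟨?_, hm.2⟩) hξ
          have hne : m ≠ t := fun e => hpar (e ▸ hm.2)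
          have := hm.1
          omega
        obtain ⟨ζ, hζ, he⟩ := ih (t - 1) (by omega) ε ξ hξ' hδξ
        exact ⟨ζ, supCond_mono (fun k hk => ⟨by omega, hk.2⟩) hζ, he⟩
  intro t ε ξ hξ hδξ
  exact main (t - (B - 1)).toNat t (by omega) ε ξ hξ hδξ

end Aux

theorem stmt4
    (C D : Type) [AddCommGroup C] [Module R₀ C] [AddCommGroup D] [Module R₀ D]
    -- the ℤ-gradings, and their internal-direct-sum property:
    (CG : ℤ → Submodule R₀ C) (DG : ℤ → Submodule R₀ D)
    (hCG : DirectSum.IsInternal CG) (hDG : DirectSum.IsInternal DG)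
    -- boundedness: only finitely many degrees are nonzero:
    (N : ℕ) (hCbd : ∀ m : ℤ, N < |m| → CG m = ⊥) (hDbd : ∀ m : ℤ, N < |m| → DG m = ⊥)
    -- the differentials, decomposed as (top degree-1 part) + (lower part of degrees 1-2j, j ≥ 1):
    (dC1 dC' : C →ₗ[R₀] C) (dD1 dD' : D →ₗ[R₀] D)
    (hdC1 : ∀ (m : ℤ), ∀ x ∈ CG m, dC1 x ∈ CG (m + 1))
    (hdC' : ∀ (m : ℤ), ∀ x ∈ CG m, dC' x ∈ ⨆ j : ℕ, ⨆ _ : 1 ≤ j, CG (m + 1 - 2 * j))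
    (hdD1 : ∀ (m : ℤ), ∀ x ∈ DG m, dD1 x ∈ DG (m + 1))
    (hdD' : ∀ (m : ℤ), ∀ x ∈ DG m, dD' x ∈ ⨆ j : ℕ, ⨆ _ : 1 ≤ j, DG (m + 1 - 2 * j))
    (hdC : ∀ x, (dC1 + dC') ((dC1 + dC') x) = 0)
    (hdD : ∀ x, (dD1 + dD') ((dD1 + dD') x) = 0)
    -- the chain map `f = f₀ + f'`, with `f₀` of degree 0 and `f'` of degrees `−2j`, `j ≥ 1`:
    (f0 f' : C →ₗ[R₀] D)
    (hf0 : ∀ (m : ℤ), ∀ x ∈ CG m, f0 x ∈ DG m)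
    (hf' : ∀ (m : ℤ), ∀ x ∈ CG m, f' x ∈ ⨆ j : ℕ, ⨆ _ : 1 ≤ j, DG (m - 2 * j))
    (hchain : ∀ x, (f0 + f') ((dC1 + dC') x) = (dD1 + dD') ((f0 + f') x))
    -- hypothesis: `f₀` is a quasi-isomorphism from `(C, d_{C,1})` to `(D, d_{D,1})`:
    (hqker : ∀ (m : ℤ), ∀ x ∈ CG m, dC1 x = 0 → dD1 (f0 x) = 0)
    (hqinj : ∀ (m : ℤ), ∀ x ∈ CG m, dC1 x = 0 →
      (∃ y ∈ DG (m - 1), f0 x = dD1 y) → ∃ z ∈ CG (m - 1), x = dC1 z)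
    (hqsurj : ∀ (m : ℤ), ∀ u ∈ DG m, dD1 u = 0 →
      ∃ x ∈ CG m, dC1 x = 0 ∧ ∃ y ∈ DG (m - 1), u = f0 x + dD1 y) :
    -- conclusion: `f` is a quasi-isomorphism of the ℤ/2-graded complexes:
    (∀ (ε : ZMod 2), ∀ x ∈ ZMod2Part CG ε, (dC1 + dC') x = 0 →
      (dD1 + dD') ((f0 + f') x) = 0) ∧
    (∀ (ε : ZMod 2), ∀ x ∈ ZMod2Part CG ε, (dC1 + dC') x = 0 →
      (∃ y ∈ ZMod2Part DG (ε + 1), (f0 + f') x = (dD1 + dD') y) →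
      ∃ z ∈ ZMod2Part CG (ε + 1), x = (dC1 + dC') z) ∧
    (∀ (ε : ZMod 2), ∀ u ∈ ZMod2Part DG ε, (dD1 + dD') u = 0 →
      ∃ x ∈ ZMod2Part CG ε, (dC1 + dC') x = 0 ∧
        ∃ y ∈ ZMod2Part DG (ε + 1), u = (f0 + f') x + (dD1 + dD') y) := by
  -- independence and basic zero-extraction
  have hindC := hCG.submodule_iSupIndep
  have hindD := hDG.submodule_iSupIndep
  have hzeroC : ∀ (n : ℤ) (p : ℤ → Prop), (∀ m, p m → m ≠ n) →
      ∀ x ∈ CG n, x ∈ SupCond CG p → x = 0 :=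
    fun _ _ hp _ hx hx' => supCond_zero hindC hp hx hx'
  have hzeroD : ∀ (n : ℤ) (p : ℤ → Prop), (∀ m, p m → m ≠ n) →
      ∀ x ∈ DG n, x ∈ SupCond DG p → x = 0 :=
    fun _ _ hp _ hx hx' => supCond_zero hindD hp hx hx'
  -- commutation of the top components
  have hcomm : ∀ (m : ℤ), ∀ z ∈ CG m, f0 (dC1 z) = dD1 (f0 z) := by
    intro m z hz
    have hmem1 : f0 (dC1 z) - dD1 (f0 z) ∈ DG (m + 1) :=
      Submodule.sub_mem _ (hf0 (m + 1) _ (hdC1 m z hz)) (hdD1 m _ (hf0 m z hz))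
    have hA : f' z ∈ SupCond DG (fun i => i ≤ m - 2) :=
      (supCond_mono fun k hk => hk.1) ((jsup_le m) (hf' m z hz))
    have hB : dC' z ∈ SupCond CG (fun i => i ≤ m - 1) := by
      have := (jsup_le (m + 1)) (hdC' m z hz)
      exact (supCond_mono fun k hk => by have := hk.1; omega) this
    have t1 : dD1 (f' z) ∈ SupCond DG (fun i => i ≤ m - 1) := by
      refine map_supCond dD1 ?_ _ hA
      intro i hi x hx
      exact mem_supCond (by omega) (hdD1 i x hx)
    have t2 : dD' (f0 z) ∈ SupCond DG (fun i => i ≤ m - 1) := by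
      have := (jsup_le (m + 1)) (hdD' m _ (hf0 m z hz))
      exact (supCond_mono fun k hk => by have := hk.1; omega) this
    have t3 : dD' (f' z) ∈ SupCond DG (fun i => i ≤ m - 1) := by
      refine map_supCond dD' ?_ _ hA
      intro i hi x hx
      have := (jsup_le (i + 1)) (hdD' i x hx)
      exact (supCond_mono fun k hk => by have := hk.1; omega) this
    have t4 : f0 (dC' z) ∈ SupCond DG (fun i => i ≤ m - 1) := by
      refine map_supCond f0 ?_ _ hB
      intro i hi x hx
      exact mem_supCond (by omega) (hf0 i x hx)
    have t5 : f' (dC1 z) ∈ SupCond DG (fun i => i ≤ m - 1) := by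
      have := (jsup_le (m + 1)) (hf' (m + 1) _ (hdC1 m z hz))
      exact (supCond_mono fun k hk => by have := hk.1; omega) this
    have t6 : f' (dC' z) ∈ SupCond DG (fun i => i ≤ m - 1) := by
      refine map_supCond f' ?_ _ hB
      intro i hi x hx
      have := (jsup_le i) (hf' i x hx)
      exact (supCond_mono fun k hk => by have := hk.1; omega) this
    have hkey : f0 (dC1 z) - dD1 (f0 z) =
        dD1 (f' z) + dD' (f0 z) + dD' (f' z) - f0 (dC' z) - f' (dC1 z) - f' (dC' z) := by
      have E := hchain z
      simp only [LinearMap.add_apply, map_add] at E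
      have E' : f0 (dC1 z) = dD1 (f0 z) + dD' (f0 z) + (dD1 (f' z) + dD' (f' z))
          - (f' (dC1 z) + (f0 (dC' z) + f' (dC' z))) := by
        rw [eq_sub_iff_add_eq, ← E]
        abel
      rw [E']
      abel
    have hmem2 : f0 (dC1 z) - dD1 (f0 z) ∈ SupCond DG (fun i => i ≤ m - 1) := by
      rw [hkey]
      exact Submodule.sub_mem _ (Submodule.sub_mem _ (Submodule.sub_mem _
        (Submodule.add_mem _ (Submodule.add_mem _ t1 t2) t3) t4) t5) t6
    have h0 : f0 (dC1 z) - dD1 (f0 z) = 0 :=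
      hzeroD (m + 1) (fun i => i ≤ m - 1) (fun i hi => by omega) _ hmem1 hmem2
    exact sub_eq_zero.mp h0
  -- the cone grading and differentials
  set δ1 : C × D →ₗ[R₀] C × D := coneMap dC1 f0 dD1 with hδ1def
  set δ' : C × D →ₗ[R₀] C × D := coneMap dC' f' dD' with hδ'def
  have hδsum : ∀ x : C × D,
      (δ1 + δ') x = (-((dC1 + dC') x.1), (f0 + f') x.1 + (dD1 + dD') x.2) := by
    intro x
    rw [LinearMap.add_apply, hδ1def, hδ'def, coneMap_apply, coneMap_apply]
    simp only [Prod.mk_add_mk, LinearMap.add_apply, Prod.mk.injEq]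
    constructor <;> abel
  have hzeroX : ∀ (n : ℤ) (p : ℤ → Prop), (∀ m, p m → m ≠ n) →
      ∀ x ∈ (CG (n + 1)).prod (DG n),
        x ∈ SupCond (fun m => (CG (m + 1)).prod (DG m)) p → x = 0 := by
    intro n p hp x hx hx'
    have h1 : (LinearMap.fst R₀ C D) x ∈ SupCond CG (fun k => ∃ m, p m ∧ k = m + 1) := by
      refine map_supCond (LinearMap.fst R₀ C D) ?_ x hx'
      intro m hm y hy
      exact mem_supCond ⟨m, hm, rfl⟩ (Submodule.mem_prod.mp hy).1
    have h2 : (LinearMap.snd R₀ C D) x ∈ SupCond DG p := by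
      refine map_supCond (LinearMap.snd R₀ C D) ?_ x hx'
      intro m hm y hy
      exact mem_supCond hm (Submodule.mem_prod.mp hy).2
    have e1 : x.1 = 0 := by
      refine hzeroC (n + 1) _ ?_ x.1 (Submodule.mem_prod.mp hx).1 h1
      rintro k ⟨m, hm, rfl⟩
      have := hp m hm
      omega
    have e2 : x.2 = 0 := hzeroD n p hp x.2 (Submodule.mem_prod.mp hx).2 h2
    exact Prod.ext e1 e2
  have hδ1X : ∀ m, ∀ x ∈ (CG (m + 1)).prod (DG m), δ1 x ∈ (CG (m + 1 + 1)).prod (DG (m + 1)) := by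
    intro m x hx
    obtain ⟨h1, h2⟩ := Submodule.mem_prod.mp hx
    rw [hδ1def, coneMap_apply]
    exact Submodule.mem_prod.mpr ⟨Submodule.neg_mem _ (hdC1 (m + 1) _ h1),
      Submodule.add_mem _ (hf0 (m + 1) _ h1) (hdD1 m _ h2)⟩
  -- helper embeddings into the cone grading
  have inlmem : ∀ (q : ℤ → Prop) (c : C), c ∈ SupCond CG q →
      ((c, (0 : D)) : C × D) ∈ SupCond (fun m => (CG (m + 1)).prod (DG m))
        (fun k => q (k + 1)) := by
    intro q c hc
    refine map_supCond (LinearMap.inl R₀ C D) ?_ c hc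
    intro i hi y hy
    refine mem_supCond (m := i - 1) (by rw [show i - 1 + 1 = i from by ring]; exact hi) ?_
    rw [LinearMap.inl_apply]
    exact Submodule.mem_prod.mpr ⟨by rw [show i - 1 + 1 = i from by ring]; exact hy,
      Submodule.zero_mem _⟩
  have inrmem : ∀ (q : ℤ → Prop) (d : D), d ∈ SupCond DG q →
      (((0 : C), d) : C × D) ∈ SupCond (fun m => (CG (m + 1)).prod (DG m)) q := by
    intro q d hd
    refine map_supCond (LinearMap.inr R₀ C D) ?_ d hd
    intro i hi y hy
    refine mem_supCond (m := i) hi ?_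
    rw [LinearMap.inr_apply]
    exact Submodule.mem_prod.mpr ⟨Submodule.zero_mem _, hy⟩
  have hδ'X : ∀ m, ∀ x ∈ (CG (m + 1)).prod (DG m), δ' x ∈
      SupCond (fun k => (CG (k + 1)).prod (DG k))
        (fun k => k ≤ m - 1 ∧ (k : ZMod 2) = (m : ZMod 2) + 1) := by
    intro m x hx
    obtain ⟨h1, h2⟩ := Submodule.mem_prod.mp hx
    have e : δ' x = -((dC' x.1, (0 : D)) : C × D) + ((0 : C), f' x.1) + ((0 : C), dD' x.2) := by
      rw [hδ'def, coneMap_apply]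
      simp only [Prod.neg_mk, neg_zero, Prod.mk_add_mk, Prod.mk.injEq]
      constructor <;> abel
    rw [e]
    refine Submodule.add_mem _ (Submodule.add_mem _ (Submodule.neg_mem _ ?_) ?_) ?_
    · have hc : dC' x.1 ∈ SupCond CG
          (fun k => k ≤ m + 1 + 1 - 2 ∧ (k : ZMod 2) = ((m + 1 + 1 : ℤ) : ZMod 2)) :=
        (jsup_le (m + 1 + 1)) (hdC' (m + 1) x.1 h1)
      refine supCond_mono ?_ (inlmem _ _ hc)
      rintro k ⟨hk1, hk2⟩
      constructor
      · omega
      · push_cast at hk2 ⊢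
        linear_combination hk2
    · have hc : f' x.1 ∈ SupCond DG
          (fun k => k ≤ m + 1 - 2 ∧ (k : ZMod 2) = ((m + 1 : ℤ) : ZMod 2)) :=
        (jsup_le (m + 1)) (hf' (m + 1) x.1 h1)
      refine supCond_mono ?_ (inrmem _ _ hc)
      rintro k ⟨hk1, hk2⟩
      refine ⟨by omega, ?_⟩
      push_cast at hk2 ⊢
      linear_combination hk2
    · have hc : dD' x.2 ∈ SupCond DG
          (fun k => k ≤ m + 1 - 2 ∧ (k : ZMod 2) = ((m + 1 : ℤ) : ZMod 2)) :=
        (jsup_le (m + 1)) (hdD' m x.2 h2)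
      refine supCond_mono ?_ (inrmem _ _ hc)
      rintro k ⟨hk1, hk2⟩
      refine ⟨by omega, ?_⟩
      push_cast at hk2 ⊢
      linear_combination hk2
  have hδδX : ∀ x : C × D, (δ1 + δ') ((δ1 + δ') x) = 0 := by
    intro x
    rw [hδsum, hδsum]
    refine Prod.ext ?_ ?_
    · show -((dC1 + dC') (-((dC1 + dC') x.1))) = 0
      rw [map_neg, neg_neg, hdC]
    · show (f0 + f') (-((dC1 + dC') x.1)) + (dD1 + dD') ((f0 + f') x.1 + (dD1 + dD') x.2) = 0
      rw [map_neg, map_add, hchain x.1, hdD]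
      abel
  have hacyX : ∀ m, ∀ x ∈ (CG (m + 1)).prod (DG m), δ1 x = 0 →
      ∃ z ∈ (CG (m - 1 + 1)).prod (DG (m - 1)), x = δ1 z := by
    intro m x hx h0
    obtain ⟨hc, hu⟩ := Submodule.mem_prod.mp hx
    rw [hδ1def, coneMap_apply] at h0
    have h1 : -(dC1 x.1) = 0 := congrArg Prod.fst h0
    have h2 : f0 x.1 + dD1 x.2 = 0 := congrArg Prod.snd h0
    have hc1 : dC1 x.1 = 0 := by rwa [neg_eq_zero] at h1
    obtain ⟨z, hz, hcz⟩ := hqinj (m + 1) x.1 hc hc1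
      ⟨-x.2, by rw [show m + 1 - 1 = m from by ring]; exact Submodule.neg_mem _ hu,
        by rw [map_neg]; exact eq_neg_of_add_eq_zero_left h2⟩
    rw [show m + 1 - 1 = m from by ring] at hz
    have hs : dD1 (x.2 + f0 z) = 0 := by
      rw [map_add, ← hcomm m z hz, ← hcz, add_comm]
      exact h2
    obtain ⟨x₁, hx₁, hdx₁, y₁, hy₁, hsplit⟩ :=
      hqsurj m (x.2 + f0 z) (Submodule.add_mem _ hu (hf0 m z hz)) hs
    refine ⟨(x₁ - z, y₁), Submodule.mem_prod.mpr
      ⟨by rw [show m - 1 + 1 = m from by ring]; exact Submodule.sub_mem _ hx₁ hz, hy₁⟩, ?_⟩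
    rw [hδ1def, coneMap_apply]
    have e1 : x.1 = -(dC1 ((x₁ - z, y₁) : C × D).1) := by
      show x.1 = -(dC1 (x₁ - z))
      rw [map_sub, hdx₁, zero_sub, neg_neg]
      exact hcz
    have e2 : x.2 = f0 ((x₁ - z, y₁) : C × D).1 + dD1 ((x₁ - z, y₁) : C × D).2 := by
      show x.2 = f0 (x₁ - z) + dD1 y₁
      rw [map_sub]
      calc x.2 = (x.2 + f0 z) - f0 z := by abel
        _ = (f0 x₁ + dD1 y₁) - f0 z := by rw [hsplit]
        _ = f0 x₁ - f0 z + dD1 y₁ := by abel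
    exact Prod.ext e1 e2
  have hbdX : ∀ m, m < -(N : ℤ) - 1 → (CG (m + 1)).prod (DG m) = ⊥ := by
    intro m hm
    have h1 : CG (m + 1) = ⊥ := hCbd _ (by rw [abs_of_neg (by omega : m + 1 < 0)]; omega)
    have h2 : DG m = ⊥ := hDbd _ (by rw [abs_of_neg (by omega : m < 0)]; omega)
    rw [h1, h2]
    refine (Submodule.eq_bot_iff _).mpr fun x hx => ?_
    obtain ⟨e1, e2⟩ := Submodule.mem_prod.mp hx
    rw [Submodule.mem_bot] at e1 e2
    exact Prod.ext e1 e2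
  have KEY := engine (fun m => (CG (m + 1)).prod (DG m)) hzeroX δ1 δ' hδ1X hδ'X hδδX hacyX
    (-(N : ℤ) - 1) hbdX
  -- embedding of cycles into the cone
  have memCx : ∀ (ε : ZMod 2), ∀ x ∈ ZMod2Part CG ε,
      ((x, (0 : D)) : C × D) ∈ SupCond (fun m => (CG (m + 1)).prod (DG m))
        (fun m => m ≤ (N : ℤ) ∧ (m : ZMod 2) = ε + 1) := by
    intro ε x hx
    rw [zmod2Part_eq] at hx
    refine map_supCond (LinearMap.inl R₀ C D) ?_ x hx
    intro m hm c hc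
    by_cases hmN : m ≤ (N : ℤ) + 1
    · have hmem : (LinearMap.inl R₀ C D) c ∈ (CG (m - 1 + 1)).prod (DG (m - 1)) := by
        rw [LinearMap.inl_apply]
        exact Submodule.mem_prod.mpr
          ⟨by rw [show m - 1 + 1 = m from by ring]; exact hc, Submodule.zero_mem _⟩
      refine mem_supCond (m := m - 1) ⟨by omega, ?_⟩ hmem
      push_cast
      linear_combination hm - two_zmod2
    · have hb : CG m = ⊥ := hCbd m (by rw [abs_of_nonneg (by omega : (0:ℤ) ≤ m)]; omega)
      rw [hb, Submodule.mem_bot] at hc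
      rw [hc, map_zero]
      exact Submodule.zero_mem _
  have memDx : ∀ (ε : ZMod 2), ∀ d ∈ ZMod2Part DG ε,
      (((0 : C), d) : C × D) ∈ SupCond (fun m => (CG (m + 1)).prod (DG m))
        (fun m => m ≤ (N : ℤ) ∧ (m : ZMod 2) = ε) := by
    intro ε d hd
    rw [zmod2Part_eq] at hd
    refine map_supCond (LinearMap.inr R₀ C D) ?_ d hd
    intro m hm u hu
    by_cases hmN : m ≤ (N : ℤ)
    · refine mem_supCond ⟨hmN, hm⟩ ?_
      rw [LinearMap.inr_apply]
      exact Submodule.mem_prod.mpr ⟨Submodule.zero_mem _, hu⟩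
    · have hb : DG m = ⊥ := hDbd m (by rw [abs_of_nonneg (by omega : (0:ℤ) ≤ m)]; omega)
      rw [hb, Submodule.mem_bot] at hu
      rw [hu, map_zero]
      exact Submodule.zero_mem _
  -- extraction of the components of the cone back to C and D
  have fstmem : ∀ (t : ℤ) (η : ZMod 2) (ζ : C × D),
      ζ ∈ SupCond (fun m => (CG (m + 1)).prod (DG m))
        (fun m => m ≤ t ∧ (m : ZMod 2) = η) → ζ.1 ∈ ZMod2Part CG (η + 1) := by
    intro t η ζ hζ
    rw [zmod2Part_eq]
    refine map_supCond (LinearMap.fst R₀ C D) ?_ ζ hζ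
    rintro m ⟨_, hm2⟩ y hy
    refine mem_supCond (m := m + 1) ?_ (Submodule.mem_prod.mp hy).1
    push_cast
    rw [hm2]
  have sndmem : ∀ (t : ℤ) (η : ZMod 2) (ζ : C × D),
      ζ ∈ SupCond (fun m => (CG (m + 1)).prod (DG m))
        (fun m => m ≤ t ∧ (m : ZMod 2) = η) → ζ.2 ∈ ZMod2Part DG η := by
    intro t η ζ hζ
    rw [zmod2Part_eq]
    refine map_supCond (LinearMap.snd R₀ C D) ?_ ζ hζ
    rintro m ⟨_, hm2⟩ y hy
    exact mem_supCond hm2 (Submodule.mem_prod.mp hy).2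
  have add2 : ∀ a : ZMod 2, a + 1 + 1 = a := by decide
  refine ⟨?_, ?_, ?_⟩
  · -- part 1
    intro ε x _ hdx
    rw [← hchain x, hdx, map_zero]
  · -- part 2
    rintro ε x hx hdx ⟨y, hy, hfx⟩
    have hxmem : ((x, -y) : C × D) ∈ SupCond (fun m => (CG (m + 1)).prod (DG m))
        (fun m => m ≤ (N : ℤ) ∧ (m : ZMod 2) = ε + 1) := by
      have p1 := memCx ε x hx
      have p2 := memDx (ε + 1) (-y) (Submodule.neg_mem _ hy)
      have e : ((x, -y) : C × D) = (x, (0 : D)) + ((0 : C), -y) := by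
        rw [Prod.mk_add_mk, add_zero, zero_add]
      rw [e]
      exact Submodule.add_mem _ p1 p2
    have hclosed : (δ1 + δ') ((x, -y) : C × D) = 0 := by
      rw [hδsum]
      refine Prod.ext ?_ ?_
      · show -((dC1 + dC') x) = 0
        rw [hdx, neg_zero]
      · show (f0 + f') x + (dD1 + dD') (-y) = 0
        rw [map_neg, hfx]
        abel
    obtain ⟨ζ, hζ, hζeq⟩ := KEY (N : ℤ) (ε + 1) _ hxmem hclosed
    rw [hδsum] at hζeq
    have h1 : x = -((dC1 + dC') ζ.1) := congrArg Prod.fst hζeq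
    refine ⟨-ζ.1, ?_, ?_⟩
    · have hz1 := fstmem _ _ _ hζ
      rw [add2 (ε + 1)] at hz1
      exact Submodule.neg_mem _ hz1
    · rw [map_neg]
      exact h1
  · -- part 3
    intro ε u hu hdu
    have humem : (((0 : C), u) : C × D) ∈ SupCond (fun m => (CG (m + 1)).prod (DG m))
        (fun m => m ≤ (N : ℤ) ∧ (m : ZMod 2) = ε) := memDx ε u hu
    have hclosed : (δ1 + δ') (((0 : C), u) : C × D) = 0 := by
      rw [hδsum]
      refine Prod.ext ?_ ?_
      · show -((dC1 + dC') 0) = 0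
        rw [map_zero, neg_zero]
      · show (f0 + f') 0 + (dD1 + dD') u = 0
        rw [map_zero, hdu, zero_add]
    obtain ⟨ζ, hζ, hζeq⟩ := KEY (N : ℤ) ε _ humem hclosed
    have hz1 : ζ.1 ∈ ZMod2Part CG ε := by
      have := fstmem _ _ _ hζ
      rwa [add2 ε] at this
    have hz2 : ζ.2 ∈ ZMod2Part DG (ε + 1) := sndmem _ _ _ hζ
    rw [hδsum] at hζeq
    have h1 : (0 : C) = -((dC1 + dC') ζ.1) := congrArg Prod.fst hζeq
    have h2 : u = (f0 + f') ζ.1 + (dD1 + dD') ζ.2 := congrArg Prod.snd hζeq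
    refine ⟨ζ.1, ?_, ?_, ζ.2, hz2, h2⟩
    · exact hz1
    · exact neg_eq_zero.mp h1.symm


end
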